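/- Suppose X and E are Banach spaces (dim X ≥ 2) such that E ⊕ E embeds isomorphically into E. Then X coarsely embeds into E if and only if sup_φ R(φ) = ∞, where the supremum is over all maps φ : X → E. -/

import Mathlib

open scoped ENNReal NNReal

noncomputable section

/-- Compression coefficient κ(φ) = sup_{t<∞} inf_{‖x−y‖≥t} ‖φ(x)−φ(y)‖. -/
def kappaCoef {X E : Type*} [NormedAddCommGroup X] [NormedAddCommGroup E]
    (φ : X → E) : ℝ≥0∞ :=
  ⨆ (t : ℝ) (_ : 0 ≤ t), ⨅ (x : X) (y : X) (_ : t ≤ ‖x - y‖), (‖φ x - φ y‖₊ : ℝ≥0∞)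

/-- Exact compression coefficient κ̄(φ) = sup_{t<∞} inf_{‖x−y‖=t} ‖φ(x)−φ(y)‖. -/
def kappaBarCoef {X E : Type*} [NormedAddCommGroup X] [NormedAddCommGroup E]
    (φ : X → E) : ℝ≥0∞ :=
  ⨆ (t : ℝ) (_ : 0 ≤ t), ⨅ (x : X) (y : X) (_ : ‖x - y‖ = t), (‖φ x - φ y‖₊ : ℝ≥0∞)

/-- Expansion coefficient ω(φ) = inf_{t>0} sup_{‖x−y‖≤t} ‖φ(x)−φ(y)‖. -/
def omegaCoef {X E : Type*} [NormedAddCommGroup X] [NormedAddCommGroup E]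
    (φ : X → E) : ℝ≥0∞ :=
  ⨅ (t : ℝ) (_ : 0 < t), ⨆ (x : X) (y : X) (_ : ‖x - y‖ ≤ t), (‖φ x - φ y‖₊ : ℝ≥0∞)

/-- Separation ratio R(φ) = κ(φ)/ω(φ); `ENNReal` division realizes the paper's conventions. -/
def sepRatio {X E : Type*} [NormedAddCommGroup X] [NormedAddCommGroup E]
    (φ : X → E) : ℝ≥0∞ :=
  kappaCoef φ / omegaCoef φ

/-- Exact separation ratio R̄(φ) = κ̄(φ)/ω(φ). -/
def sepRatioBar {X E : Type*} [NormedAddCommGroup X] [NormedAddCommGroup E]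
    (φ : X → E) : ℝ≥0∞ :=
  kappaBarCoef φ / omegaCoef φ

/-- Compression modulus κ_φ(t). -/
def kappaMod {X E : Type*} [NormedAddCommGroup X] [NormedAddCommGroup E]
    (φ : X → E) (t : ℝ) : ℝ≥0∞ :=
  ⨅ (x : X) (y : X) (_ : t ≤ ‖x - y‖), (‖φ x - φ y‖₊ : ℝ≥0∞)

/-- Exact compression modulus κ̄_φ(t). -/
def kappaBarMod {X E : Type*} [NormedAddCommGroup X] [NormedAddCommGroup E]
    (φ : X → E) (t : ℝ) : ℝ≥0∞ :=
  ⨅ (x : X) (y : X) (_ : ‖x - y‖ = t), (‖φ x - φ y‖₊ : ℝ≥0∞)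

/-- Exact expansion modulus ω̄_φ(t). -/
def omegaBarMod {X E : Type*} [NormedAddCommGroup X] [NormedAddCommGroup E]
    (φ : X → E) (t : ℝ) : ℝ≥0∞ :=
  ⨆ (x : X) (y : X) (_ : ‖x - y‖ = t), (‖φ x - φ y‖₊ : ℝ≥0∞)

/-- Expansion modulus ω_φ(t). -/
def omegaMod {X E : Type*} [NormedAddCommGroup X] [NormedAddCommGroup E]
    (φ : X → E) (t : ℝ) : ℝ≥0∞ :=
  ⨆ (x : X) (y : X) (_ : ‖x - y‖ ≤ t), (‖φ x - φ y‖₊ : ℝ≥0∞)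

/-- Coarse embedding: ρ₁(‖x−y‖) ≤ ‖ψ(x)−ψ(y)‖ ≤ ρ₂(‖x−y‖) with ρ₁ → ∞. -/
def CoarseEmbedding {X E : Type*} [NormedAddCommGroup X] [NormedAddCommGroup E]
    (ψ : X → E) : Prop :=
  ∃ ρ₁ ρ₂ : ℝ → ℝ, Filter.Tendsto ρ₁ Filter.atTop Filter.atTop ∧
    ∀ x y : X, ρ₁ ‖x - y‖ ≤ ‖ψ x - ψ y‖ ∧ ‖ψ x - ψ y‖ ≤ ρ₂ ‖x - y‖

/-- Solvent map. -/
def Solvent {X E : Type*} [NormedAddCommGroup X] [NormedAddCommGroup E]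
    (φ : X → E) : Prop :=
  ∃ R : ℕ → ℝ, ∀ n : ℕ, 1 ≤ n → ∀ x y : X,
    R n ≤ ‖x - y‖ → ‖x - y‖ ≤ R n + n → (n : ℝ) ≤ ‖φ x - φ y‖

/-- Lipschitz for large distances. -/
def LipschitzLarge {X E : Type*} [NormedAddCommGroup X] [NormedAddCommGroup E]
    (φ : X → E) : Prop :=
  ∃ K : ℝ, ∀ x y : X, ‖φ x - φ y‖ ≤ K * ‖x - y‖ + K

end

/-!
A coarse embedding ψ has κ(ψ) = ∞, and ω(ψ) < ∞ because, when dim X ≥ 2, two points at distance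
at most 2 have a common point at distance exactly 1 from both, so ψ moves them by at most 2ρ₂(1).

Conversely, rescaling maps with large R(φ) in domain and range gives maps θ_k that move points at
distance ≤ 1 by at most ε_k and points at distance ≥ s_k by at least K_k. Iterating the embedding
J : E × E → E gives operators e_k = `copyMap J k` with ‖e_k‖ ≤ ‖J‖^(k+1) and
‖∑ e_j d_j‖ ≥ c^(k+1) ‖d_k‖. With ε_k = (2(‖J‖+1))^-(k+1) and K_k = k / c^(k+1), the map
ψ x = ∑ e_k (θ_k x - θ_k 0) is a coarse embedding: chaining along segments bounds the k-th term by
2^-(k+1) (‖x - y‖ + 1), and the k-th term alone forces ‖ψ x - ψ y‖ ≥ k once ‖x - y‖ ≥ s_k.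
-/

open Filter Metric Finset

section Moduli

variable {X E : Type*} [NormedAddCommGroup X] [NormedAddCommGroup E] {φ : X → E}

theorem coe_nnnorm_eq_ofReal_norm (v : E) : (‖v‖₊ : ℝ≥0∞) = ENNReal.ofReal ‖v‖ :=
  ENNReal.ofReal_coe_nnreal.symm

theorem omegaCoef_le_ofReal {t C : ℝ} (ht : 0 < t)
    (h : ∀ x y : X, ‖x - y‖ ≤ t → ‖φ x - φ y‖ ≤ C) : omegaCoef φ ≤ ENNReal.ofReal C :=
  iInf₂_le_of_le t ht <| iSup₂_le fun x y => iSup_le fun hxy => by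
    rw [coe_nnnorm_eq_ofReal_norm]
    exact ENNReal.ofReal_le_ofReal (h x y hxy)

theorem ofReal_le_kappaCoef {t C : ℝ} (ht : 0 ≤ t)
    (h : ∀ x y : X, t ≤ ‖x - y‖ → C ≤ ‖φ x - φ y‖) : ENNReal.ofReal C ≤ kappaCoef φ :=
  le_iSup₂_of_le t ht <| le_iInf₂ fun x y => le_iInf fun hxy => by
    rw [coe_nnnorm_eq_ofReal_norm]
    exact ENNReal.ofReal_le_ofReal (h x y hxy)

theorem exists_pos_forall_norm_sub_lt_of_omegaCoef_lt {a : ℝ≥0} (h : omegaCoef φ < a) :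
    ∃ t > 0, ∀ x y : X, ‖x - y‖ ≤ t → ‖φ x - φ y‖ < a := by
  simp only [omegaCoef, iInf_lt_iff] at h
  obtain ⟨t, ht, hlt⟩ := h
  refine ⟨t, ht, fun x y hxy => ?_⟩
  have : (‖φ x - φ y‖₊ : ℝ≥0∞) < a := hlt.trans_le' (le_iSup₂_of_le x y (le_iSup_of_le hxy le_rfl))
  exact_mod_cast this

theorem exists_forall_lt_norm_sub_of_lt_kappaCoef {b : ℝ≥0} (h : b < kappaCoef φ) :
    ∃ t, ∀ x y : X, t ≤ ‖x - y‖ → b < ‖φ x - φ y‖ := by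
  simp only [kappaCoef, lt_iSup_iff] at h
  obtain ⟨t, -, hlt⟩ := h
  refine ⟨t, fun x y hxy => ?_⟩
  have : (b : ℝ≥0∞) < ‖φ x - φ y‖₊ := hlt.trans_le (iInf₂_le_of_le x y (iInf_le _ hxy))
  exact_mod_cast this

end Moduli

theorem exists_gt_mul_lt_of_lt_div {M : ℝ≥0} {κ ω : ℝ≥0∞} (h : (M : ℝ≥0∞) < κ / ω) :
    ∃ a : ℝ≥0, ω < a ∧ M * a < κ := by
  have hω : ω < ⊤ := by
    refine lt_top_iff_ne_top.2 fun hω => ?_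
    simp [hω] at h
  have hcont : ∀ᶠ a in nhdsWithin ω (Set.Ioi ω), (M : ℝ≥0∞) * a < κ :=
    nhdsWithin_le_nhds <| ((ENNReal.continuous_const_mul ENNReal.coe_ne_top).tendsto ω).eventually
      (gt_mem_nhds (ENNReal.mul_lt_of_lt_div h))
  have : (nhdsWithin ω (Set.Ioi ω)).NeBot := nhdsGT_neBot_of_exists_gt ⟨⊤, hω⟩
  obtain ⟨a, haκ, hωa, ha⟩ :=
    (hcont.and (eventually_mem_nhdsWithin.and (nhdsWithin_le_nhds (gt_mem_nhds hω)))).exists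
  exact ⟨a.toNNReal, by rwa [ENNReal.coe_toNNReal ha.ne], by rwa [ENNReal.coe_toNNReal ha.ne]⟩

theorem sphere_inter_sphere_nonempty {X : Type*} [NormedAddCommGroup X] [NormedSpace ℝ X]
    (hX : 1 < Module.rank ℝ X) {x y : X} {r : ℝ} (hxy : dist x y ≤ 2 * r) :
    (sphere x r ∩ sphere y r).Nonempty := by
  have hr : 0 ≤ r := by linarith [dist_nonneg (x := x) (y := y)]
  have hsphere := isConnected_sphere hX x hr
  rcases eq_or_ne x y with rfl | hne
  · simpa using hsphere.nonempty
  have hd : 0 < dist x y := dist_pos.2 hne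
  have hleft : ∀ c : ℝ, |c| = r / dist x y → AffineMap.lineMap x y c ∈ sphere x r := fun c hc => by
    rw [mem_sphere, dist_lineMap_left, Real.norm_eq_abs, hc, div_mul_cancel₀ _ hd.ne']
  have hright : ∀ c : ℝ, dist (AffineMap.lineMap x y c) y = |dist x y - c * dist x y| := fun c => by
    rw [dist_lineMap_right, Real.norm_eq_abs, ← abs_of_pos hd, ← abs_mul, abs_of_pos hd, sub_mul,
      one_mul]
  have hnear : dist (AffineMap.lineMap x y (r / dist x y)) y ≤ r := by
    rw [hright, div_mul_cancel₀ _ hd.ne', abs_sub_le_iff]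
    constructor <;> linarith
  have hfar : r ≤ dist (AffineMap.lineMap x y (-(r / dist x y))) y := by
    rw [hright, neg_mul, div_mul_cancel₀ _ hd.ne', sub_neg_eq_add, abs_of_pos (by positivity)]
    linarith
  obtain ⟨z, hz, hzy⟩ := hsphere.isPreconnected.intermediate_value
    (hleft _ (abs_of_nonneg (by positivity)))
    (hleft _ (by rw [abs_neg, abs_of_nonneg (by positivity)]))
    (continuous_id.dist continuous_const).continuousOn ⟨hnear, hfar⟩
  exact ⟨z, hz, hzy⟩

theorem norm_sub_le_of_forall_norm_sub_le_one {X E : Type*} [NormedAddCommGroup X]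
    [NormedSpace ℝ X] [NormedAddCommGroup E] {θ : X → E} {ε : ℝ}
    (h : ∀ x y : X, ‖x - y‖ ≤ 1 → ‖θ x - θ y‖ ≤ ε) (x y : X) :
    ‖θ x - θ y‖ ≤ ε * (‖x - y‖ + 1) := by
  have hchain : ∀ n : ℕ, ∀ x y : X, ‖x - y‖ ≤ n + 1 → ‖θ x - θ y‖ ≤ (n + 1) * ε := by
    intro n
    induction n with
    | zero => simpa using h
    | succ n ih =>
      intro x y hxy
      push_cast at hxy
      have hn : (0 : ℝ) < n + 2 := by positivity
      have hc : 0 ≤ 1 - (n + 2 : ℝ)⁻¹ := sub_nonneg.2 (inv_le_one_of_one_le₀ (by linarith))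
      set z := AffineMap.lineMap x y ((n + 2 : ℝ)⁻¹)
      have hxz : ‖x - z‖ ≤ 1 := by
        rw [← dist_eq_norm, dist_left_lineMap, Real.norm_of_nonneg (inv_pos.2 hn).le,
          dist_eq_norm, inv_mul_le_iff₀ hn]
        linarith
      have hzy : ‖z - y‖ ≤ n + 1 := by
        rw [← dist_eq_norm, dist_lineMap_right, Real.norm_of_nonneg hc, dist_eq_norm]
        calc (1 - (n + 2 : ℝ)⁻¹) * ‖x - y‖ ≤ (1 - (n + 2 : ℝ)⁻¹) * (n + 2) := by
              gcongr
              linarith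
          _ = n + 1 := by field_simp; ring
      calc ‖θ x - θ y‖ ≤ ‖θ x - θ z‖ + ‖θ z - θ y‖ := norm_sub_le_norm_sub_add_norm_sub _ _ _
        _ ≤ ε + (n + 1) * ε := add_le_add (h x z hxz) (ih z y hzy)
        _ = (↑(n + 1) + 1) * ε := by push_cast; ring
  have hε : 0 ≤ ε := by simpa using h x x (by simp)
  have hfloor := Nat.lt_floor_add_one ‖x - y‖
  calc ‖θ x - θ y‖ ≤ (⌊‖x - y‖⌋₊ + 1) * ε := hchain _ x y hfloor.le
    _ ≤ ε * (‖x - y‖ + 1) := by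
      rw [mul_comm]
      gcongr
      exact Nat.floor_le (norm_nonneg _)

section CoarseEmbedding

variable {X E : Type*} [NormedAddCommGroup X] [NormedAddCommGroup E] {ψ : X → E}

theorem CoarseEmbedding.kappaCoef_eq_top (hψ : CoarseEmbedding ψ) : kappaCoef ψ = ⊤ := by
  obtain ⟨ρ₁, _, hρ₁, hbound⟩ := hψ
  refine ENNReal.eq_top_of_forall_nnreal_le fun C => ?_
  obtain ⟨t, ht⟩ := tendsto_atTop_atTop.1 hρ₁ C
  simpa using ofReal_le_kappaCoef (le_max_right t 0) fun x y hxy =>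
    (ht _ (le_of_max_le_left hxy)).trans (hbound x y).1

theorem CoarseEmbedding.omegaCoef_lt_top [NormedSpace ℝ X] (hX : 1 < Module.rank ℝ X)
    (hψ : CoarseEmbedding ψ) : omegaCoef ψ < ⊤ := by
  obtain ⟨_, ρ₂, _, hbound⟩ := hψ
  refine (omegaCoef_le_ofReal (C := ρ₂ 1 + ρ₂ 1) two_pos fun x y hxy => ?_).trans_lt
    ENNReal.ofReal_lt_top
  obtain ⟨z, hzx, hzy⟩ :=
    sphere_inter_sphere_nonempty hX (r := 1) (by rw [dist_eq_norm]; linarith)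
  rw [mem_sphere, dist_eq_norm] at hzx hzy
  have hxz := (hbound z x).2
  have hzy' := (hbound z y).2
  rw [hzx, norm_sub_rev] at hxz
  rw [hzy] at hzy'
  linarith [norm_sub_le_norm_sub_add_norm_sub (ψ x) (ψ z) (ψ y)]

theorem CoarseEmbedding.sepRatio_eq_top [NormedSpace ℝ X] (hX : 1 < Module.rank ℝ X)
    (hψ : CoarseEmbedding ψ) : sepRatio ψ = ⊤ := by
  rw [sepRatio, hψ.kappaCoef_eq_top, ENNReal.top_div_of_ne_top (hψ.omegaCoef_lt_top hX).ne]

theorem coarseEmbedding_of_norm_sub_le (ρ₂ : ℝ → ℝ) (hup : ∀ x y, ‖ψ x - ψ y‖ ≤ ρ₂ ‖x - y‖)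
    (hlow : ∀ K : ℝ, ∃ s, ∀ x y, s ≤ ‖x - y‖ → K ≤ ‖ψ x - ψ y‖) : CoarseEmbedding ψ := by
  -- The cap `ofReal r` keeps `kappaMod ψ r` from being `⊤` (whose `toReal` is `0`) when no pair
  -- of points is at distance `≥ r`.
  refine ⟨fun r => (kappaMod ψ r ⊓ ENNReal.ofReal r).toReal, ρ₂,
    tendsto_atTop_atTop.2 fun K => ?_, fun x y => ⟨?_, hup x y⟩⟩
  · obtain ⟨s, hs⟩ := hlow K
    refine ⟨max s K, fun r hr => ?_⟩
    rw [← ENNReal.ofReal_le_iff_le_toReal (inf_le_right.trans_lt ENNReal.ofReal_lt_top).ne]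
    refine le_inf (le_iInf₂ fun x y => le_iInf fun hxy => ?_)
      (ENNReal.ofReal_le_ofReal (le_of_max_le_right hr))
    rw [coe_nnnorm_eq_ofReal_norm]
    exact ENNReal.ofReal_le_ofReal (hs x y ((le_of_max_le_left hr).trans hxy))
  · refine ENNReal.toReal_le_of_le_ofReal (norm_nonneg _) (inf_le_left.trans ?_)
    rw [← coe_nnnorm_eq_ofReal_norm]
    exact iInf₂_le_of_le x y (iInf_le _ le_rfl)

end CoarseEmbedding

section CopyMap

variable {E : Type*} [NormedAddCommGroup E] [NormedSpace ℝ E] (J : E × E →L[ℝ] E)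

def copyMap : ℕ → E →L[ℝ] E
  | 0 => J.comp (ContinuousLinearMap.inl ℝ E E)
  | k + 1 => (J.comp (ContinuousLinearMap.inr ℝ E E)).comp (copyMap k)

theorem norm_copyMap_apply_le (k : ℕ) (v : E) : ‖copyMap J k v‖ ≤ ‖J‖ ^ (k + 1) * ‖v‖ := by
  induction k with
  | zero => simpa [copyMap] using J.le_opNorm (v, 0)
  | succ k ih =>
    calc ‖J (0, copyMap J k v)‖ ≤ ‖J‖ * ‖copyMap J k v‖ := by
          simpa using J.le_opNorm (0, copyMap J k v)
      _ ≤ ‖J‖ * (‖J‖ ^ (k + 1) * ‖v‖) := by gcongr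
      _ = ‖J‖ ^ (k + 1 + 1) * ‖v‖ := by ring

theorem sum_range_succ_copyMap (N : ℕ) (d : ℕ → E) :
    ∑ j ∈ range (N + 1), copyMap J j (d j) = J (d 0, ∑ j ∈ range N, copyMap J j (d (j + 1))) := by
  rw [sum_range_succ']
  simp only [copyMap, ContinuousLinearMap.comp_apply, ContinuousLinearMap.inl_apply,
    ContinuousLinearMap.inr_apply, ← map_sum, ← map_add]
  congr 1
  ext <;> simp [Prod.fst_sum, Prod.snd_sum]

variable {J} {c : ℝ}

theorem pow_mul_norm_le_norm_sum_copyMap (hc : 0 ≤ c) (hJ : ∀ v, c * ‖v‖ ≤ ‖J v‖) {k N : ℕ}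
    (hkN : k < N) (d : ℕ → E) : c ^ (k + 1) * ‖d k‖ ≤ ‖∑ j ∈ range N, copyMap J j (d j)‖ := by
  obtain ⟨N, rfl⟩ : ∃ M, N = M + 1 := ⟨N - 1, by omega⟩
  rw [sum_range_succ_copyMap]
  refine le_trans ?_ (hJ _)
  induction k generalizing N d with
  | zero => simpa using mul_le_mul_of_nonneg_left (norm_fst_le (d 0, _)) hc
  | succ k ih =>
    obtain ⟨N, rfl⟩ : ∃ M, N = M + 1 := ⟨N - 1, by omega⟩
    calc c ^ (k + 1 + 1) * ‖d (k + 1)‖ = c * (c ^ (k + 1) * ‖d (k + 1)‖) := by ring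
      _ ≤ c * ‖∑ j ∈ range (N + 1), copyMap J j (d (j + 1))‖ := by
          rw [sum_range_succ_copyMap]
          exact mul_le_mul_of_nonneg_left
            ((ih (N := N) (d := fun j => d (j + 1)) (by omega)).trans (hJ _)) hc
      _ ≤ c * ‖(d 0, ∑ j ∈ range (N + 1), copyMap J j (d (j + 1)))‖ :=
          mul_le_mul_of_nonneg_left (norm_snd_le (d 0, _)) hc

theorem HasSum.pow_mul_norm_le_of_copyMap (hc : 0 ≤ c) (hJ : ∀ v, c * ‖v‖ ≤ ‖J v‖)
    {d : ℕ → E} {S : E} (hS : HasSum (fun j => copyMap J j (d j)) S) (k : ℕ) :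
    c ^ (k + 1) * ‖d k‖ ≤ ‖S‖ :=
  ge_of_tendsto hS.tendsto_sum_nat.norm <| (eventually_gt_atTop k).mono fun _ hN =>
    pow_mul_norm_le_norm_sum_copyMap hc hJ hN d

end CopyMap

section Construction

variable {X E : Type*} [NormedAddCommGroup X] [NormedSpace ℝ X] [NormedAddCommGroup E]
  [NormedSpace ℝ E]

theorem exists_forall_norm_sub_le_of_iSup_sepRatio_eq_top
    (h : ⨆ φ : X → E, sepRatio φ = ⊤) {ε : ℝ} (hε : 0 < ε) (K : ℝ) :
    ∃ θ : X → E, ∃ s, (∀ x y, ‖x - y‖ ≤ 1 → ‖θ x - θ y‖ ≤ ε) ∧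
      ∀ x y, s ≤ ‖x - y‖ → K ≤ ‖θ x - θ y‖ := by
  set M := (K / ε).toNNReal
  obtain ⟨φ, hφ⟩ :=
    lt_iSup_iff.1 (h ▸ ENNReal.coe_lt_top : (M : ℝ≥0∞) < ⨆ φ : X → E, sepRatio φ)
  obtain ⟨a, hωa, hMa⟩ := exists_gt_mul_lt_of_lt_div hφ
  obtain ⟨t, ht, hsmall⟩ := exists_pos_forall_norm_sub_lt_of_omegaCoef_lt hωa
  obtain ⟨s, hlarge⟩ :=
    exists_forall_lt_norm_sub_of_lt_kappaCoef (b := M * a) (by exact_mod_cast hMa)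
  have ha : 0 < (a : ℝ) := by exact_mod_cast zero_le.trans_lt hωa
  have hdist : ∀ x y : X, ‖t • x - t • y‖ = t * ‖x - y‖ := fun x y => by
    rw [← smul_sub, norm_smul, Real.norm_of_nonneg ht.le]
  have himage : ∀ x y : X, ‖(ε / a) • φ (t • x) - (ε / a) • φ (t • y)‖
      = ε / a * ‖φ (t • x) - φ (t • y)‖ := fun x y => by
    rw [← smul_sub, norm_smul, Real.norm_of_nonneg (by positivity)]
  refine ⟨fun x => (ε / a) • φ (t • x), s / t, fun x y hxy => ?_, fun x y hxy => ?_⟩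
  · rw [himage]
    calc ε / a * ‖φ (t • x) - φ (t • y)‖ ≤ ε / a * a := by
          gcongr
          exact (hsmall _ _ (by rw [hdist]; nlinarith [norm_nonneg (x - y)])).le
      _ = ε := div_mul_cancel₀ _ ha.ne'
  · rw [himage]
    have hK : K ≤ ε * M := by
      rw [← div_le_iff₀' hε]
      exact Real.le_coe_toNNReal _
    calc K ≤ ε / a * (M * a) := by rwa [mul_comm (M : ℝ), ← mul_assoc, div_mul_cancel₀ _ ha.ne']
      _ ≤ ε / a * ‖φ (t • x) - φ (t • y)‖ := by
          gcongr
          exact_mod_cast (hlarge _ _ (by rw [hdist]; rwa [div_le_iff₀' ht] at hxy)).le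

theorem coarseEmbedding_tsum_copyMap [CompleteSpace E] {J : E × E →L[ℝ] E} {c : ℝ} (hc : 0 < c)
    (hJ : ∀ v, c * ‖v‖ ≤ ‖J v‖) (θ : ℕ → X → E)
    (hsmall : ∀ k x y, ‖x - y‖ ≤ 1 → ‖θ k x - θ k y‖ ≤ (2 * (‖J‖ + 1))⁻¹ ^ (k + 1))
    (hlarge : ∀ k : ℕ, ∃ s, ∀ x y, s ≤ ‖x - y‖ → k / c ^ (k + 1) ≤ ‖θ k x - θ k y‖) :
    CoarseEmbedding fun x => ∑' k, copyMap J k (θ k x - θ k 0) := by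
  have hterm : ∀ x y k, ‖copyMap J k (θ k x - θ k y)‖ ≤ (‖x - y‖ + 1) / 2 / 2 ^ k := by
    intro x y k
    calc ‖copyMap J k (θ k x - θ k y)‖ ≤ ‖J‖ ^ (k + 1) * ‖θ k x - θ k y‖ :=
          norm_copyMap_apply_le J k _
      _ ≤ (‖J‖ + 1) ^ (k + 1) * ((2 * (‖J‖ + 1))⁻¹ ^ (k + 1) * (‖x - y‖ + 1)) := by
          gcongr
          · linarith
          · exact norm_sub_le_of_forall_norm_sub_le_one (hsmall k) x y
      _ = (‖x - y‖ + 1) / 2 / 2 ^ k := by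
          rw [← mul_assoc, ← mul_pow, mul_inv, mul_left_comm,
            mul_inv_cancel₀ (by positivity), mul_one, inv_pow]
          ring
  have hsummable : ∀ x y, Summable fun k => copyMap J k (θ k x - θ k y) := fun x y =>
    (hasSum_geometric_two' _).summable.of_norm_bounded (hterm x y)
  have hdiff : ∀ x y, HasSum (fun k => copyMap J k (θ k x - θ k y))
      ((∑' k, copyMap J k (θ k x - θ k 0)) - ∑' k, copyMap J k (θ k y - θ k 0)) := fun x y => by
    simpa only [← map_sub, sub_sub_sub_cancel_right] using
      (hsummable x 0).hasSum.sub (hsummable y 0).hasSum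
  refine coarseEmbedding_of_norm_sub_le (fun r => r + 1)
    (fun x y => (hdiff x y).norm_le_of_bounded (hasSum_geometric_two' _) (hterm x y)) fun K => ?_
  obtain ⟨s, hs⟩ := hlarge ⌈K⌉₊
  refine ⟨s, fun x y hxy => ?_⟩
  have hcpow : 0 < c ^ (⌈K⌉₊ + 1) := by positivity
  calc K ≤ ⌈K⌉₊ := Nat.le_ceil K
    _ = c ^ (⌈K⌉₊ + 1) * (⌈K⌉₊ / c ^ (⌈K⌉₊ + 1)) := (mul_div_cancel₀ _ hcpow.ne').symm
    _ ≤ c ^ (⌈K⌉₊ + 1) * ‖θ ⌈K⌉₊ x - θ ⌈K⌉₊ y‖ := by gcongr; exact hs x y hxy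
    _ ≤ _ := (hdiff x y).pow_mul_norm_le_of_copyMap hc.le hJ _

theorem exists_coarseEmbedding_of_iSup_sepRatio_eq_top [CompleteSpace E]
    {J : E × E →L[ℝ] E} {c : ℝ} (hc : 0 < c) (hJ : ∀ v, c * ‖v‖ ≤ ‖J v‖)
    (h : ⨆ φ : X → E, sepRatio φ = ⊤) : ∃ ψ : X → E, CoarseEmbedding ψ := by
  choose θ s hsmall hlarge using fun k : ℕ =>
    exists_forall_norm_sub_le_of_iSup_sepRatio_eq_top h
      (ε := (2 * (‖J‖ + 1))⁻¹ ^ (k + 1)) (by positivity) (k / c ^ (k + 1))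
  exact ⟨_, coarseEmbedding_tsum_copyMap hc hJ θ hsmall fun k => ⟨s k, hlarge k⟩⟩

end Construction

theorem coarse_embedding_iff_sup_sepRatio_general {X E : Type*}
    [NormedAddCommGroup X] [NormedSpace ℝ X]
    [NormedAddCommGroup E] [NormedSpace ℝ E] [CompleteSpace E]
    (hX : 2 ≤ Module.rank ℝ X)
    (hEE : ∃ (J : (E × E) →L[ℝ] E) (c : ℝ), 0 < c ∧ ∀ v : E × E, c * ‖v‖ ≤ ‖J v‖) :
    (∃ ψ : X → E, CoarseEmbedding ψ) ↔ (⨆ φ : X → E, sepRatio φ) = ⊤ := by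
  obtain ⟨J, c, hc, hJ⟩ := hEE
  refine ⟨fun ⟨ψ, hψ⟩ => ?_, exists_coarseEmbedding_of_iSup_sepRatio_eq_top hc hJ⟩
  exact eq_top_mono (le_iSup _ ψ) (hψ.sepRatio_eq_top (Cardinal.one_lt_two.trans_le hX))

theorem coarse_embedding_iff_sup_sepRatio {X E : Type*}
    [NormedAddCommGroup X] [NormedSpace ℝ X] [CompleteSpace X]
    [NormedAddCommGroup E] [NormedSpace ℝ E] [CompleteSpace E]
    (hX : 2 ≤ Module.rank ℝ X) (hE : 2 ≤ Module.rank ℝ E)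
    (hEE : ∃ (J : (E × E) →L[ℝ] E) (c : ℝ), 0 < c ∧ ∀ v : E × E, c * ‖v‖ ≤ ‖J v‖) :
    (∃ ψ : X → E, CoarseEmbedding ψ) ↔ (⨆ φ : X → E, sepRatio φ) = ⊤ :=
  coarse_embedding_iff_sup_sepRatio_general hX hEE
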